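/- For every odd positive integer p, the Turán number ex(p+3, B_p) equals (p+1)(p+3)/2. -/
import Mathlib

open SimpleGraph

/-- A graph contains the book `B_p` iff some edge has at least `p` common neighbors. -/
def SimpleGraph.ContainsBook {V : Type*} (G : SimpleGraph V) (p : ℕ) : Prop :=
  ∃ x y, G.Adj x y ∧ p ≤ (G.commonNeighbors x y).ncard

/-- The Turán number `ex(n, B_p)`: the maximum number of edges of a simple graph
on `n` vertices containing no book `B_p`. -/
noncomputable def bookTuranNumber (n p : ℕ) : ℕ :=
  sSup {e : ℕ | ∃ G : SimpleGraph (Fin n), ¬ G.ContainsBook p ∧ G.edgeSet.ncard = e}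

/-- The disjoint union of `m` copies of the complete graph `K_k`. -/
def unionComplete (m k : ℕ) : SimpleGraph (Fin m × Fin k) :=
  SimpleGraph.fromRel fun a b => a.1 = b.1

/-- The join `G ∨ H` of two graphs. -/
def SimpleGraph.join {α β : Type*} (G : SimpleGraph α) (H : SimpleGraph β) :
    SimpleGraph (α ⊕ β) := (Gᶜ ⊕g Hᶜ)ᶜ

/-- A disjoint union of cycles `C_{i 0} + ⋯ + C_{i (t-1)}`. -/
def cycleFamily (t : ℕ) (i : Fin t → ℕ) : SimpleGraph (Σ j : Fin t, Fin (i j)) :=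
  SimpleGraph.fromRel fun a b => ∃ h : a.1 = b.1, (SimpleGraph.cycleGraph (i b.1)).Adj (h ▸ a.2) b.2

/-- Complete graph minus the perfect matching `{a, a+c}`. -/
def mcGraph (n : ℕ) (c : Fin n) : SimpleGraph (Fin n) :=
  SimpleGraph.fromRel fun a b => b ≠ a + c

instance (n : ℕ) (c : Fin n) : DecidableRel (mcGraph n c).Adj := fun a b =>
  decidable_of_iff _ (SimpleGraph.fromRel_adj _ a b).symm

lemma mcGraph_adj {n : ℕ} [NeZero n] {c : Fin n} (hc : c + c = 0) (a b : Fin n) :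
    (mcGraph n c).Adj a b ↔ a ≠ b ∧ b ≠ a + c := by
  simp only [mcGraph, fromRel_adj]
  constructor
  · rintro ⟨hab, h | h⟩
    · exact ⟨hab, h⟩
    · refine ⟨hab, fun hba => h ?_⟩
      rw [hba, add_assoc, hc, add_zero]
  · rintro ⟨hab, h⟩
    exact ⟨hab, Or.inl h⟩

lemma mcGraph_neighborFinset {n : ℕ} [NeZero n] {c : Fin n} (hc : c + c = 0) (a : Fin n) :
    (mcGraph n c).neighborFinset a = Finset.univ \ {a, a + c} := by
  ext b
  simp only [SimpleGraph.mem_neighborFinset, mcGraph_adj hc, Finset.mem_sdiff,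
    Finset.mem_univ, Finset.mem_insert, Finset.mem_singleton, true_and]
  constructor
  · rintro ⟨h1, h2⟩; push_neg; exact ⟨fun hb => h1 hb.symm, h2⟩
  · intro h; push_neg at h; exact ⟨fun hb => h.1 hb.symm, h.2⟩

lemma mcGraph_degree {n : ℕ} [NeZero n] {c : Fin n} (hc : c + c = 0) (hc0 : c ≠ 0) (a : Fin n) :
    (mcGraph n c).degree a = n - 2 := by
  rw [SimpleGraph.degree, mcGraph_neighborFinset hc, Finset.card_sdiff_of_subset (by simp)]
  have h2 : ({a, a + c} : Finset (Fin n)).card = 2 := by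
    rw [Finset.card_insert_of_notMem (by simp [hc0]), Finset.card_singleton]
  simp [h2]

theorem stmt6 (p : ℕ) (hp : 1 ≤ p) (hodd : Odd p) :
    bookTuranNumber (p + 3) p = (p + 1) * (p + 3) / 2 := by
  classical
  obtain ⟨k, hk⟩ := hodd
  set n := p + 3 with hn
  have hn4 : 4 ≤ n := by omega
  have hne : NeZero n := ⟨by omega⟩
  set M := (p + 1) * (p + 3) / 2 with hM
  have hkn : k + 2 < n := by omega
  set c : Fin n := ⟨k + 2, hkn⟩ with hcdef
  have hc : c + c = 0 := by
    apply Fin.ext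
    rw [Fin.val_add, Fin.val_zero]
    show (k + 2 + (k + 2)) % n = 0
    have h1 : k + 2 + (k + 2) = n := by omega
    rw [h1, Nat.mod_self]
  have hc0 : c ≠ 0 := by
    intro h
    have h1 := congrArg Fin.val h
    rw [Fin.val_zero] at h1
    simp [hcdef] at h1
  have hprod : n * (n - 2) = 2 * ((k + 1) * (p + 3)) := by
    have h1 : n - 2 = p + 1 := by omega
    rw [h1, hn, hk]; ring
  have hMt : M = (k + 1) * (p + 3) := by
    rw [hM, hk]
    rw [show (2 * k + 1 + 1) * (2 * k + 1 + 3) = ((k + 1) * (2 * k + 1 + 3)) * 2 by ring]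
    exact Nat.mul_div_cancel _ (by norm_num)
  -- membership: the construction
  have hmem : M ∈ {e : ℕ | ∃ G : SimpleGraph (Fin n), ¬ G.ContainsBook p ∧ G.edgeSet.ncard = e} := by
    refine ⟨mcGraph n c, ?_, ?_⟩
    · rintro ⟨x, y, hxy, hcard⟩
      rw [mcGraph_adj hc] at hxy
      obtain ⟨hxyne, hyxc⟩ := hxy
      have hxyc : x ≠ y + c := by
        intro h; apply hyxc; rw [h, add_assoc, hc, add_zero]
      have hxxc : x ≠ x + c := by simp [hc0]
      have hyyc : y ≠ y + c := by simp [hc0]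
      have hccne : x + c ≠ y + c := fun h => hxyne (add_right_cancel h)
      have hsub : (mcGraph n c).commonNeighbors x y ⊆
          ((Finset.univ \ {x, y, x + c, y + c} : Finset (Fin n)) : Set (Fin n)) := by
        intro z hz
        rw [SimpleGraph.mem_commonNeighbors] at hz
        rw [mcGraph_adj hc, mcGraph_adj hc] at hz
        simp only [Finset.mem_coe, Finset.mem_sdiff, Finset.mem_univ, true_and,
          Finset.mem_insert, Finset.mem_singleton]
        push_neg
        exact ⟨fun h => hz.1.1 h.symm, fun h => hz.2.1 h.symm, hz.1.2, hz.2.2⟩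
      have hcard4 : ({x, y, x + c, y + c} : Finset (Fin n)).card = 4 := by
        rw [Finset.card_insert_of_notMem (by simp [hxyne, hxxc, hxyc]),
          Finset.card_insert_of_notMem (by simp [hyxc, hyyc]),
          Finset.card_insert_of_notMem (by simp [hccne]), Finset.card_singleton]
      have hle : ((mcGraph n c).commonNeighbors x y).ncard ≤ n - 4 := by
        have h := Set.ncard_le_ncard hsub (Finset.finite_toSet _)
        rwa [Set.ncard_coe_finset, Finset.card_sdiff_of_subset (by simp), Finset.card_univ,
          Fintype.card_fin, hcard4] at h
      omega
    · rw [Set.ncard_eq_toFinset_card', ← SimpleGraph.edgeFinset]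
      have hhand := (mcGraph n c).sum_degrees_eq_twice_card_edges
      have hdeg : ∀ v, (mcGraph n c).degree v = n - 2 := mcGraph_degree hc hc0
      rw [Finset.sum_congr rfl (fun v _ => hdeg v), Finset.sum_const, Finset.card_univ,
        Fintype.card_fin, smul_eq_mul] at hhand
      omega
  -- upper bound
  have hub : ∀ e ∈ {e : ℕ | ∃ G : SimpleGraph (Fin n), ¬ G.ContainsBook p ∧ G.edgeSet.ncard = e},
      e ≤ M := by
    rintro e ⟨G, hnb, rfl⟩
    rw [Set.ncard_eq_toFinset_card', ← SimpleGraph.edgeFinset]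
    by_contra hlt
    push_neg at hlt
    set S := Finset.univ.filter (fun v => G.degree v = n - 1) with hS
    have hdegle : ∀ v, G.degree v ≤ n - 2 + (if v ∈ S then 1 else 0) := by
      intro v
      by_cases hv : v ∈ S
      · simp only [hv, if_true]
        have h := G.degree_lt_card_verts v
        rw [Fintype.card_fin] at h
        omega
      · simp only [hv, if_false, add_zero]
        have h1 := G.degree_lt_card_verts v
        rw [Fintype.card_fin] at h1
        have h2 : G.degree v ≠ n - 1 := by
          simp only [hS, Finset.mem_filter, Finset.mem_univ, true_and] at hv; exact hv
        omega
    have hsum : 2 * G.edgeFinset.card ≤ n * (n - 2) + S.card := by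
      rw [← G.sum_degrees_eq_twice_card_edges]
      calc ∑ v, G.degree v ≤ ∑ v, (n - 2 + if v ∈ S then 1 else 0) :=
            Finset.sum_le_sum fun v _ => hdegle v
        _ = n * (n - 2) + S.card := by
            rw [Finset.sum_add_distrib, Finset.sum_const, Finset.card_univ, Fintype.card_fin,
              smul_eq_mul, Finset.sum_ite_mem, Finset.univ_inter, Finset.sum_const,
              smul_eq_mul, mul_one]
    have hScard : S.card ≤ 1 := by
      by_contra hS2
      push_neg at hS2
      obtain ⟨x, hx, y, hy, hxy⟩ := Finset.one_lt_card.mp hS2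
      simp only [hS, Finset.mem_filter, Finset.mem_univ, true_and] at hx hy
      have hfull : ∀ z : Fin n, ∀ w, w ≠ z → G.degree z = n - 1 → G.Adj z w := by
        intro z w hwz hz
        have hsub : G.neighborFinset z ⊆ Finset.univ.erase z := by
          intro u hu
          rw [SimpleGraph.mem_neighborFinset] at hu
          exact Finset.mem_erase.mpr ⟨(G.ne_of_adj hu).symm, Finset.mem_univ u⟩
        have hcards : (Finset.univ.erase z).card = n - 1 := by
          rw [Finset.card_erase_of_mem (Finset.mem_univ z), Finset.card_univ, Fintype.card_fin]
        have heq : G.neighborFinset z = Finset.univ.erase z := by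
          apply Finset.eq_of_subset_of_card_le hsub
          rw [hcards]
          exact le_of_eq (by rw [← hz]; rfl)
        have hmem' : w ∈ G.neighborFinset z := by
          rw [heq]; exact Finset.mem_erase.mpr ⟨hwz, Finset.mem_univ w⟩
        rwa [SimpleGraph.mem_neighborFinset] at hmem'
      apply hnb
      refine ⟨x, y, hfull x y (Ne.symm hxy) hx, ?_⟩
      have hsub2 : ((Finset.univ \ {x, y} : Finset (Fin n)) : Set (Fin n)) ⊆
          G.commonNeighbors x y := by
        intro z hz
        simp only [Finset.mem_coe, Finset.mem_sdiff, Finset.mem_univ, true_and,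
          Finset.mem_insert, Finset.mem_singleton] at hz
        push_neg at hz
        exact ⟨hfull x z hz.1 hx, hfull y z hz.2 hy⟩
      have hcard2 : ((Finset.univ \ {x, y} : Finset (Fin n)) : Set (Fin n)).ncard = n - 2 := by
        rw [Set.ncard_coe_finset, Finset.card_sdiff_of_subset (by simp), Finset.card_univ, Fintype.card_fin]
        rw [Finset.card_insert_of_notMem (by simpa using hxy), Finset.card_singleton]
      have hge := Set.ncard_le_ncard hsub2 (Set.toFinite _)
      rw [hcard2] at hge
      omega
    omega
  exact (IsGreatest.csSup_eq ⟨hmem, hub⟩)
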